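/- Let H be a Hilbert space, v ∈ B(H) a unitary, and y, z ∈ B(H) with ‖y‖ ≤ 1 and ‖z‖ ≤ 1. If for all real t the matrix [[t·I, y],[z, t·v]] in M₂(B(H)) has norm at most √(1 + t²), then z = −v y*. -/

import Mathlib

/-!
Testing the norm bound on a vector `(ξ, η)` and expanding both sides, the terms quadratic in `t`
cancel because `v` is isometric, leaving `2 t (re ⟪ξ, y η⟫ + re ⟪z ξ, v η⟫) ≤ C(ξ, η)` for all
real `t`. Hence `re ⟪(y* + v* z) ξ, η⟫ = 0` for all `ξ, η`, so `y* + v* z = 0`, and multiplying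
by `v` on the left gives `z = -v y*`.
-/

open ContinuousLinearMap in
/-- The block operator `[[a, b], [c, d]]` on the Hilbert space `H ⊕₂ H`,
realizing the canonical C*-norm on `M₂(B(H))`. -/
noncomputable def blockOp {H : Type*} [NormedAddCommGroup H] [InnerProductSpace ℂ H]
    (a b c d : H →L[ℂ] H) : WithLp 2 (H × H) →L[ℂ] WithLp 2 (H × H) :=
  (((WithLp.prodContinuousLinearEquiv 2 ℂ H H).symm : H × H →L[ℂ] WithLp 2 (H × H)).comp
    ((a.comp (fst ℂ H H) + b.comp (snd ℂ H H)).prod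
      (c.comp (fst ℂ H H) + d.comp (snd ℂ H H)))).comp
    ((WithLp.prodContinuousLinearEquiv 2 ℂ H H) : WithLp 2 (H × H) →L[ℂ] H × H)

open scoped InnerProductSpace
open ContinuousLinearMap

theorem eq_zero_of_forall_mul_le {c D : ℝ} (h : ∀ t : ℝ, t * c ≤ D) : c = 0 := by
  by_contra hc
  have := h ((D + 1) / c)
  rw [div_mul_cancel₀ _ hc] at this
  linarith

section

variable {H : Type*} [NormedAddCommGroup H] [InnerProductSpace ℂ H]

theorem norm_blockOp_toLp_sq (a b c d : H →L[ℂ] H) (ξ η : H) :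
    ‖blockOp a b c d (WithLp.toLp 2 (ξ, η))‖ ^ 2 = ‖a ξ + b η‖ ^ 2 + ‖c ξ + d η‖ ^ 2 :=
  WithLp.prod_norm_sq_eq_of_L2 _

theorem norm_smul_add_sq (t : ℝ) (ξ ζ : H) :
    ‖(t : ℂ) • ξ + ζ‖ ^ 2 = t ^ 2 * ‖ξ‖ ^ 2 + 2 * (t * (⟪ξ, ζ⟫_ℂ).re) + ‖ζ‖ ^ 2 := by
  rw [norm_add_sq (𝕜 := ℂ), inner_smul_left, norm_smul, Complex.norm_real, Real.norm_eq_abs,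
    mul_pow, sq_abs, Complex.conj_ofReal, RCLike.re_to_complex, Complex.re_ofReal_mul]

theorem norm_add_smul_sq (t : ℝ) (ζ ξ : H) :
    ‖ζ + (t : ℂ) • ξ‖ ^ 2 = ‖ζ‖ ^ 2 + 2 * (t * (⟪ζ, ξ⟫_ℂ).re) + t ^ 2 * ‖ξ‖ ^ 2 := by
  rw [norm_add_sq (𝕜 := ℂ), inner_smul_right, norm_smul, Complex.norm_real, Real.norm_eq_abs,
    mul_pow, sq_abs, RCLike.re_to_complex, Complex.re_ofReal_mul]

theorem two_mul_re_inner_le_of_norm_blockOp_le {v y z : H →L[ℂ] H} (hv : ∀ η, ‖v η‖ = ‖η‖)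
    {t : ℝ} (ht : ‖blockOp ((t : ℂ) • 1) y z ((t : ℂ) • v)‖ ≤ √(1 + t ^ 2)) (ξ η : H) :
    2 * t * ((⟪ξ, y η⟫_ℂ).re + (⟪z ξ, v η⟫_ℂ).re) ≤ ‖ξ‖ ^ 2 + ‖η‖ ^ 2 - ‖y η‖ ^ 2 - ‖z ξ‖ ^ 2 := by
  set x : WithLp 2 (H × H) := WithLp.toLp 2 (ξ, η)
  have hx : ‖x‖ ^ 2 = ‖ξ‖ ^ 2 + ‖η‖ ^ 2 := WithLp.prod_norm_sq_eq_of_L2 x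
  have hbound : ‖blockOp ((t : ℂ) • 1) y z ((t : ℂ) • v) x‖ ^ 2 ≤ (1 + t ^ 2) * ‖x‖ ^ 2 := by
    calc _ ≤ (√(1 + t ^ 2) * ‖x‖) ^ 2 := by gcongr; exact le_of_opNorm_le _ ht x
      _ = (1 + t ^ 2) * ‖x‖ ^ 2 := by rw [mul_pow, Real.sq_sqrt (by positivity)]
  rw [norm_blockOp_toLp_sq, hx] at hbound
  simp only [smul_apply, one_apply_eq_self] at hbound
  rw [norm_smul_add_sq, norm_add_smul_sq, hv] at hbound
  linarith

theorem eq_zero_of_forall_re_inner_eq_zero {w : H →L[ℂ] H} (h : ∀ ξ η, (⟪w ξ, η⟫_ℂ).re = 0) :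
    w = 0 := by
  ext ξ
  have := h ξ (w ξ)
  rw [← RCLike.re_to_complex, inner_self_eq_norm_sq] at this
  simpa using this

end

theorem stmt12_general {H : Type*} [NormedAddCommGroup H] [InnerProductSpace ℂ H] [CompleteSpace H]
    (v y z : H →L[ℂ] H) (hv : v ∈ unitary (H →L[ℂ] H))
    (h : ∀ t : ℝ, ‖blockOp ((t : ℂ) • 1) y z ((t : ℂ) • v)‖ ≤ Real.sqrt (1 + t ^ 2)) :
    z = -(v * star y) := by
  have hre : ∀ ξ η, (⟪ξ, y η⟫_ℂ).re + (⟪z ξ, v η⟫_ℂ).re = 0 := fun ξ η =>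
    eq_zero_of_forall_mul_le (D := ‖ξ‖ ^ 2 + ‖η‖ ^ 2 - ‖y η‖ ^ 2 - ‖z ξ‖ ^ 2) fun t => by
      have := two_mul_re_inner_le_of_norm_blockOp_le (norm_map_of_mem_unitary hv) (h (t / 2)) ξ η
      rwa [mul_div_cancel₀ t two_ne_zero] at this
  have hw : star y + star v * z = 0 := eq_zero_of_forall_re_inner_eq_zero fun ξ η => by
    simpa only [star_eq_adjoint, add_apply, mul_apply_eq_comp, comp_apply, inner_add_left,
      adjoint_inner_left, Complex.add_re] using hre ξ η
  rw [Unitary.mem_iff] at hv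
  calc z = v * (star v * z) := by rw [← mul_assoc, hv.2, one_mul]
    _ = -(v * star y) := by rw [eq_neg_of_add_eq_zero_right hw, mul_neg]

/-- If `v ∈ B(H)` is unitary, `‖y‖, ‖z‖ ≤ 1`, and `‖[[t·I, y], [z, t·v]]‖ ≤ √(1 + t²)`
for all real `t`, then `z = -v y*`. -/
theorem stmt12 {H : Type*} [NormedAddCommGroup H] [InnerProductSpace ℂ H] [CompleteSpace H]
    (v y z : H →L[ℂ] H) (hv : v ∈ unitary (H →L[ℂ] H)) (hy : ‖y‖ ≤ 1) (hz : ‖z‖ ≤ 1)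
    (h : ∀ t : ℝ, ‖blockOp ((t : ℂ) • 1) y z ((t : ℂ) • v)‖ ≤ Real.sqrt (1 + t ^ 2)) :
    z = -(v * star y) :=
  stmt12_general v y z hv h
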